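/- Let d, N ≥ 1, let a_1,…,a_N, b_1,…,b_N ∈ {0,1}^d and c ∈ {0,1}^d. Define M ∈ ℝ^{(N+1)×(N+1)} by M_{ij} = −∑_{s=1}^d a_i[s]·b_j[s]·c[s] for i, j ≤ N, and M_{ij} = 0 whenever i = N+1 or j = N+1. Let w ∈ ℝ^{N+1} with w_j = 1 for j ≤ N and w_{N+1} = 2. For i ≤ N let t_i be the number of indices j ≤ N with ∑_{s=1}^d a_i[s]·b_j[s]·c[s] = 0. Then (hardmax(M)·w)_i = (t_i + 2)/(t_i + 1) for every i ≤ N, and (hardmax(M)·w)_{N+1} = (N + 2)/(N + 1). -/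

import Mathlib

open scoped BigOperators
open Classical

/-- hardmax(v)_i = 1/|I_max(v)| if v_i attains the maximum, and 0 otherwise. -/
noncomputable def hardmax {n : ℕ} (v : Fin n → ℝ) : Fin n → ℝ :=
  fun i => if v i = ⨆ j, v j then
    1 / ((Finset.univ.filter fun j => v j = ⨆ j', v j').card : ℝ)
  else 0

/-- Row-wise hardmax of a matrix. -/
noncomputable def mhardmax {n k : ℕ} (A : Matrix (Fin n) (Fin k) ℝ) :
    Matrix (Fin n) (Fin k) ℝ :=
  Matrix.of fun i => hardmax (A i)

/-! Every entry of `M` is `≤ 0` and the last column vanishes, so each row attains its maximum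
`0` at the last index. Hardmax attention then averages `w` over the zeros of the row: the `t_i`
indices `j` with `a_i, b_j, c` orthogonal, each of weight `1`, plus the last index, of weight `2`.
The last row vanishes identically, so there `t = N`. -/

open Finset

theorem nonneg_of_eq_zero_or_eq_one {α : Type*} [Preorder α] [Zero α] [One α]
    [ZeroLEOneClass α] {x : α} (h : x = 0 ∨ x = 1) : 0 ≤ x :=
  h.elim (fun h => h.ge) (fun h => h ▸ zero_le_one)

theorem hardmax_apply_of_isGreatest {n : ℕ} {v : Fin n → ℝ} {m : ℝ}
    (hm : IsGreatest (Set.range v) m) (i : Fin n) :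
    hardmax v i = if v i = m then 1 / (#{j | v j = m} : ℝ) else 0 := by
  simp only [hardmax, iSup, hm.csSup_eq]

theorem hardmax_dotProduct_of_isGreatest {n : ℕ} {v : Fin n → ℝ} {m : ℝ}
    (hm : IsGreatest (Set.range v) m) (w : Fin n → ℝ) :
    hardmax v ⬝ᵥ w = (∑ j ∈ {j | v j = m}, w j) / #{j | v j = m} := by
  simp only [dotProduct, hardmax_apply_of_isGreatest hm, ite_mul, zero_mul, sum_ite,
    sum_const_zero, add_zero, one_div, inv_mul_eq_div, sum_div]

theorem hardmax_dotProduct_of_nonpos_of_last_eq_zero {n : ℕ} {v w : Fin (n + 1) → ℝ}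
    (hv : ∀ j, v j ≤ 0) (hvlast : v (Fin.last n) = 0)
    (hw : ∀ j : Fin n, w j.castSucc = 1) (hwlast : w (Fin.last n) = 2) :
    hardmax v ⬝ᵥ w =
      ((#{j : Fin n | v j.castSucc = 0} : ℝ) + 2) /
        ((#{j : Fin n | v j.castSucc = 0} : ℝ) + 1) := by
  have hm : IsGreatest (Set.range v) 0 := ⟨⟨_, hvlast⟩, Set.forall_mem_range.2 hv⟩
  have hsum : ∑ j ∈ {j | v j = 0}, w j = (#{j : Fin n | v j.castSucc = 0} : ℝ) + 2 := by
    simp only [sum_filter, Fin.sum_univ_castSucc, hw, hvlast, hwlast, if_true,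
      natCast_card_filter]
  have hcard : (#{j | v j = 0} : ℝ) = (#{j : Fin n | v j.castSucc = 0} : ℝ) + 1 := by
    simp only [natCast_card_filter, Fin.sum_univ_castSucc, hvlast, if_true]
  rw [hardmax_dotProduct_of_isGreatest hm, hsum, hcard]

theorem hardmax_attention_threeOV_gadget_general {d N : ℕ}
    (a b : Fin N → Fin d → ℝ) (c : Fin d → ℝ)
    (ha : ∀ i s, a i s = 0 ∨ a i s = 1)
    (hb : ∀ j s, b j s = 0 ∨ b j s = 1)
    (hc : ∀ s, c s = 0 ∨ c s = 1)
    (M : Matrix (Fin (N + 1)) (Fin (N + 1)) ℝ)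
    (hM : ∀ i j : Fin N, M i.castSucc j.castSucc = -∑ s, a i s * b j s * c s)
    (hMrow : ∀ j : Fin (N + 1), M (Fin.last N) j = 0)
    (hMcol : ∀ i : Fin (N + 1), M i (Fin.last N) = 0)
    (w : Fin (N + 1) → ℝ)
    (hw : ∀ j : Fin N, w j.castSucc = 1) (hwlast : w (Fin.last N) = 2)
    (t : Fin N → ℕ)
    (ht : ∀ i, t i = (Finset.univ.filter
      fun j : Fin N => (∑ s, a i s * b j s * c s) = 0).card) :
    (∀ i : Fin N,
      (mhardmax M).mulVec w i.castSucc = ((t i : ℝ) + 2) / ((t i : ℝ) + 1)) ∧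
    (mhardmax M).mulVec w (Fin.last N) = ((N : ℝ) + 2) / ((N : ℝ) + 1) := by
  have hM_nonpos : ∀ i j, M i j ≤ 0 := by
    intro i j
    induction i using Fin.lastCases with
    | last => exact (hMrow j).le
    | cast i =>
      induction j using Fin.lastCases with
      | last => exact (hMcol _).le
      | cast j =>
        rw [hM, neg_nonpos]
        exact sum_nonneg fun s _ => mul_nonneg (mul_nonneg (nonneg_of_eq_zero_or_eq_one (ha i s))
          (nonneg_of_eq_zero_or_eq_one (hb j s))) (nonneg_of_eq_zero_or_eq_one (hc s))
  have hrow (i : Fin (N + 1)) : (mhardmax M).mulVec w i =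
      ((#{j : Fin N | M i j.castSucc = 0} : ℝ) + 2) /
        ((#{j : Fin N | M i j.castSucc = 0} : ℝ) + 1) :=
    hardmax_dotProduct_of_nonpos_of_last_eq_zero (hM_nonpos i) (hMcol i) hw hwlast
  refine ⟨fun i => ?_, ?_⟩
  · simp only [hrow, hM, neg_eq_zero, ht]
  · simp only [hrow, hMrow, filter_true, card_univ, Fintype.card_fin]

/-- The hardmax-attention gadget of the 3-OV reduction: with
`M_{ij} = −∑_s a_i[s]·b_j[s]·c[s]` for `i,j ≤ N`, `M` zero on the last row and column,
and `w = (1,…,1,2)`, the product `hardmax(M)·w` equals `(t_i+2)/(t_i+1)` in coordinate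
`i ≤ N` (where `t_i` counts the `j` with `∑_s a_i[s]·b_j[s]·c[s] = 0`) and
`(N+2)/(N+1)` in the last coordinate. -/
theorem hardmax_attention_threeOV_gadget {d N : ℕ} (hd : 1 ≤ d) (hN : 1 ≤ N)
    (a b : Fin N → Fin d → ℝ) (c : Fin d → ℝ)
    (ha : ∀ i s, a i s = 0 ∨ a i s = 1)
    (hb : ∀ j s, b j s = 0 ∨ b j s = 1)
    (hc : ∀ s, c s = 0 ∨ c s = 1)
    (M : Matrix (Fin (N + 1)) (Fin (N + 1)) ℝ)
    (hM : ∀ i j : Fin N, M i.castSucc j.castSucc = -∑ s, a i s * b j s * c s)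
    (hMrow : ∀ j : Fin (N + 1), M (Fin.last N) j = 0)
    (hMcol : ∀ i : Fin (N + 1), M i (Fin.last N) = 0)
    (w : Fin (N + 1) → ℝ)
    (hw : ∀ j : Fin N, w j.castSucc = 1) (hwlast : w (Fin.last N) = 2)
    (t : Fin N → ℕ)
    (ht : ∀ i, t i = (Finset.univ.filter
      fun j : Fin N => (∑ s, a i s * b j s * c s) = 0).card) :
    (∀ i : Fin N,
      (mhardmax M).mulVec w i.castSucc = ((t i : ℝ) + 2) / ((t i : ℝ) + 1)) ∧
    (mhardmax M).mulVec w (Fin.last N) = ((N : ℝ) + 2) / ((N : ℝ) + 1) :=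
  hardmax_attention_threeOV_gadget_general a b c ha hb hc M hM hMrow hMcol w hw hwlast t ht
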